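/- arXiv:2503.21752 — 3 statements merged into one kernel-verified Lean document; each statement's English description precedes it below -/
import Mathlib

section
/- Let $E \subseteq \mathbb{R}^n$ be a finite set of vectors and $W \subseteq \mathbb{R}^n$ a linear subspace such that the convex cone generated by $E$ intersects $W$ only in $\{0\}$, and $0 \notin \operatorname{conv}(E)$. Then there exists a linear functional $\alpha: \mathbb{R}^n \to \mathbb{R}$ vanishing on $W$ with $\alpha(e) > 0$ for all $e \in E$. -/
open Finset

/-- The convex cone generated by a finite set `E ⊆ ℝ^n`: all nonnegative linear
combinations of elements of `E`. -/
def coneOf {n : ℕ} (E : Finset (Fin n → ℝ)) : Set (Fin n → ℝ) :=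
  {x | ∃ c : (Fin n → ℝ) → ℝ, (∀ v, 0 ≤ c v) ∧ x = ∑ v ∈ E, c v • v}

/-!
Since `conv E ⊆ cone E`, the hypotheses make the compact convex set `conv E` disjoint from the
closed subspace `W`. Strict separation gives a functional `f` and `v` with `f < v` on `conv E`
and `v < f` on `W`; a linear functional bounded below on a subspace vanishes there, so `v < 0`,
and `-f` is the required functional.
-/

theorem convexHull_subset_coneOf {n : ℕ} (E : Finset (Fin n → ℝ)) :
    convexHull ℝ (E : Set (Fin n → ℝ)) ⊆ coneOf E := by
  intro x hx
  rw [Finset.convexHull_eq] at hx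
  obtain ⟨w, hw_nonneg, hw_sum, rfl⟩ := hx
  refine ⟨Set.indicator E w, Set.indicator_nonneg hw_nonneg, ?_⟩
  rw [Finset.centerMass_eq_of_sum_1 _ _ hw_sum]
  exact Finset.sum_congr rfl fun v hv => by rw [Set.indicator_of_mem (mem_coe.2 hv), id]

theorem LinearMap.eq_zero_of_forall_lt_apply {𝕜 M : Type*} [Field 𝕜] [Preorder 𝕜]
    [AddCommGroup M] [Module 𝕜 M] (f : M →ₗ[𝕜] 𝕜) (W : Submodule 𝕜 M) {v : 𝕜}
    (hv : ∀ w ∈ W, v < f w) : ∀ w ∈ W, f w = 0 := by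
  intro w hw
  by_contra hfw
  have := hv _ (W.smul_mem (v / f w) hw)
  rw [map_smul, smul_eq_mul, div_mul_cancel₀ v hfw] at this
  exact lt_irrefl v this

theorem exists_dual_eq_zero_on_submodule_pos_on_compact {E : Type*} [TopologicalSpace E]
    [AddCommGroup E] [IsTopologicalAddGroup E] [Module ℝ E] [ContinuousSMul ℝ E]
    [LocallyConvexSpace ℝ E] {K : Set E} (hK_convex : Convex ℝ K) (hK_compact : IsCompact K)
    (W : Submodule ℝ E) (hW : IsClosed (W : Set E)) (hKW : Disjoint K W) :
    ∃ f : StrongDual ℝ E, (∀ w ∈ W, f w = 0) ∧ ∀ x ∈ K, 0 < f x := by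
  obtain ⟨f, u, v, hfK, huv, hfW⟩ :=
    geometric_hahn_banach_compact_closed hK_convex hK_compact W.convex hW hKW
  have hf_zero := f.toLinearMap.eq_zero_of_forall_lt_apply W hfW
  have hv : v < 0 := (hf_zero 0 W.zero_mem) ▸ hfW 0 W.zero_mem
  refine ⟨-f, fun w hw => by simpa using hf_zero w hw, fun x hx => ?_⟩
  simpa using (hfK x hx).trans (huv.trans hv)

/-- If `E ⊆ ℝ^n` is finite, `W` is a linear subspace meeting the
convex cone generated by `E` only in `{0}`, and `0 ∉ conv E`, then there is a linear
functional vanishing on `W` and positive on every element of `E`. -/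
theorem exists_functional_vanishing_on_subspace_pos_on_set
    {n : ℕ} (E : Finset (Fin n → ℝ)) (W : Submodule ℝ (Fin n → ℝ))
    (hcone : ∀ x ∈ coneOf E, x ∈ W → x = 0)
    (hconv : (0 : Fin n → ℝ) ∉ convexHull ℝ (E : Set (Fin n → ℝ))) :
    ∃ α : (Fin n → ℝ) →ₗ[ℝ] ℝ, (∀ w ∈ W, α w = 0) ∧ ∀ e ∈ E, 0 < α e := by
  have hdisj : Disjoint (convexHull ℝ (E : Set (Fin n → ℝ))) W :=
    Set.disjoint_left.2 fun x hx hxW =>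
      hconv (hcone x (convexHull_subset_coneOf E hx) hxW ▸ hx)
  obtain ⟨f, hfW, hfE⟩ := exists_dual_eq_zero_on_submodule_pos_on_compact
    (convex_convexHull ℝ _) (E.finite_toSet.isCompact_convexHull (𝕜 := ℝ)) W
    (Submodule.closed_of_finiteDimensional W) hdisj
  exact ⟨f, hfW, fun e he => hfE e (subset_convexHull ℝ _ he)⟩
end

section
/- Let $n \geq 2$ and $d \geq 1$. A $d$-dimensional hypertournament $T$ on $n$ vertices is acyclic if and only if there exists a cochain $\alpha \in B^d(K_n^{(d+1)};\mathbb{R})$ (a coboundary) such that $\alpha(e) > 0$ for every oriented edge $e \in E(T)$. -/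
open Finset

variable {V : Type} [Fintype V] [LinearOrder V]

/-- Incidence number between a simplex `σ` and a codimension-one face `τ`:
`(-1)^i` where `i` is the position of the vertex `σ \ τ` in the increasing
ordering of `σ`, and `0` if `τ` is not a codimension-one face of `σ`. -/
def inc (σ τ : Finset V) : ℤ :=
  if τ ⊆ σ ∧ σ.card = τ.card + 1 then
    ∑ v ∈ σ \ τ, (-1 : ℤ) ^ ((σ.filter (fun x => x < v)).card)
  else 0

/-- The augmented chain group of the simplicial complex `S` in (augmented) degree `k`:
the free module on the simplices of `S` having `k` vertices (so `k = 0` corresponds to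
the empty simplex, and geometric dimension `k - 1`).  A basis simplex corresponds to the
oriented simplex `(v_0 v_1 ⋯)` with vertices listed in increasing order. -/
abbrev Chain (R : Type) [CommRing R] (S : Finset (Finset V)) (k : ℕ) : Type :=
  {σ : Finset V // σ ∈ S ∧ σ.card = k} → R

/-- The simplicial boundary map (augmented: in lowest degree it is the augmentation
sending every vertex to `1`).  `bdry R S k : C_k → C_{k-1}` in the usual (geometric)
indexing of the paper. -/
def bdry (R : Type) [CommRing R] (S : Finset (Finset V)) (k : ℕ) :
    Chain R S (k + 1) →ₗ[R] Chain R S k :=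
  LinearMap.pi fun τ => ∑ σ : {σ : Finset V // σ ∈ S ∧ σ.card = k + 1},
    (inc σ.1 τ.1 : R) • LinearMap.proj σ

/-- `S` is (the set of simplices of) a simplicial complex with vertex set `V`,
augmented with the empty simplex. -/
def IsComplex (S : Finset (Finset V)) : Prop :=
  ∅ ∈ S ∧ (∀ σ ∈ S, ∀ τ ⊆ σ, τ ∈ S) ∧ ∀ v : V, {v} ∈ S

/-- The simplicial complex associated to a `(d+1)`-uniform hypergraph with edge set `E`:
the full `(d-1)`-skeleton on the vertex set together with the edges. -/
def cx (E : Finset (Finset V)) (d : ℕ) : Finset (Finset V) :=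
  univ.filter (fun σ : Finset V => σ.card ≤ d) ∪ E

/-- The complex of the complete `(d+1)`-uniform hypergraph on `n` vertices. -/
def completeCx (n d : ℕ) : Finset (Finset (Fin n)) :=
  univ.filter (fun σ : Finset (Fin n) => σ.card ≤ d + 1)

/-- Coefficientwise inclusion of integral chains into real chains. -/
def castChain (S : Finset (Finset V)) (k : ℕ) : Chain ℤ S k →ₗ[ℤ] Chain ℝ S k :=
  LinearMap.pi fun τ => ((Int.castAddHom ℝ).toIntLinearMap).comp (LinearMap.proj τ)

/-- The basis chain (increasingly ordered oriented simplex) corresponding to a simplex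
of `S` with `k` vertices. -/
def basisChain (R : Type) [CommRing R] {S : Finset (Finset V)} {k : ℕ}
    (σ : {σ : Finset V // σ ∈ S ∧ σ.card = k}) : Chain R S k :=
  Pi.single σ 1

/-!
Acyclicity says that no nonzero nonnegative combination of the chosen edges `ε σ • σ` is a
cycle. These edges are linearly independent, so this is the same as saying that their
boundaries satisfy no nontrivial nonnegative linear relation. By Gordan's alternative —
strictly separating `0` from the convex hull of the boundaries — that holds exactly when some
functional `γ` on `C_{d-1}` is positive on every boundary `∂(ε σ • σ)`, i.e. when the coboundary
`γ ∘ ∂` is positive on `E(T)`.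
-/

section Gordan

variable {W : Type} [TopologicalSpace W] [AddCommGroup W] [Module ℝ W] [IsTopologicalAddGroup W]
  [ContinuousSMul ℝ W] [LocallyConvexSpace ℝ W] [T2Space W] {I : Type} [Fintype I]

theorem exists_dual_forall_pos_of_sum_smul_eq_zero (w : I → W)
    (h : ∀ c : I → ℝ, (∀ i, 0 ≤ c i) → ∑ i, c i • w i = 0 → c = 0) :
    ∃ γ : Module.Dual ℝ W, ∀ i, 0 < γ (w i) := by
  classical
  set L := Fintype.linearCombination ℝ w
  have hzero : (0 : W) ∉ L '' stdSimplex ℝ I := by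
    rintro ⟨c, ⟨hc_nonneg, hc_sum⟩, hLc⟩
    rw [h c hc_nonneg hLc] at hc_sum
    simp at hc_sum
  obtain ⟨f, u, hf0, hf⟩ := geometric_hahn_banach_point_closed
    ((convex_stdSimplex ℝ I).linear_image L)
    ((isCompact_stdSimplex ℝ I).image L.continuous_of_finiteDimensional).isClosed hzero
  refine ⟨f.toLinearMap, fun i => ?_⟩
  have hwi : w i ∈ L '' stdSimplex ℝ I :=
    ⟨Pi.single i 1, single_mem_stdSimplex ℝ i, by simp [L]⟩
  rw [map_zero] at hf0
  exact hf0.trans (hf _ hwi)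

theorem gordan_alternative (w : I → W) :
    (∀ c : I → ℝ, (∀ i, 0 ≤ c i) → ∑ i, c i • w i = 0 → c = 0) ↔
      ∃ γ : Module.Dual ℝ W, ∀ i, 0 < γ (w i) := by
  refine ⟨exists_dual_forall_pos_of_sum_smul_eq_zero w, ?_⟩
  rintro ⟨γ, hγ⟩ c hc hsum
  have hγsum : ∑ i, c i * γ (w i) = 0 := by simpa [map_sum] using congrArg γ hsum
  funext i
  have hterm := (Finset.sum_eq_zero_iff_of_nonneg fun j _ =>
    mul_nonneg (hc j) (hγ j).le).mp hγsum i (mem_univ i)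
  exact (mul_eq_zero.mp hterm).resolve_right (hγ i).ne'

end Gordan

theorem cone_inter_ker_trivial_iff {M N I : Type} [AddCommGroup M] [Module ℝ M] [AddCommGroup N]
    [Module ℝ N] [Fintype I] (f : M →ₗ[ℝ] N) {v : I → M} (hv : LinearIndependent ℝ v) :
    (∀ z : M, (∃ c : I → ℝ, (∀ i, 0 ≤ c i) ∧ z = ∑ i, c i • v i) → f z = 0 → z = 0) ↔
      ∀ c : I → ℝ, (∀ i, 0 ≤ c i) → ∑ i, c i • f (v i) = 0 → c = 0 := by
  have hf : ∀ c : I → ℝ, f (∑ i, c i • v i) = ∑ i, c i • f (v i) := by simp [map_sum]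
  constructor
  · intro h c hc hsum
    exact funext <| Fintype.linearIndependent_iff.mp hv c (h _ ⟨c, hc, rfl⟩ ((hf c).trans hsum))
  · rintro h z ⟨c, hc, rfl⟩ hfz
    rw [h c hc ((hf c).symm.trans hfz)]
    simp

theorem hypertournament_acyclic_iff_coboundary_general (n d : ℕ)
    (ε : {σ : Finset (Fin n) // σ ∈ completeCx n d ∧ σ.card = d + 1} → ℤ)
    (hε : ∀ σ, ε σ = 1 ∨ ε σ = -1) :
    (∀ z : Chain ℝ (completeCx n d) (d + 1),
        (∃ c : {σ : Finset (Fin n) // σ ∈ completeCx n d ∧ σ.card = d + 1} → ℝ,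
          (∀ σ, 0 ≤ c σ) ∧ z = ∑ σ, c σ • ((ε σ : ℝ) • basisChain ℝ σ)) →
        bdry ℝ (completeCx n d) d z = 0 → z = 0) ↔
      ∃ γ : Module.Dual ℝ (Chain ℝ (completeCx n d) d),
        ∀ σ, 0 < γ.comp (bdry ℝ (completeCx n d) d) ((ε σ : ℝ) • basisChain ℝ σ) := by
  have hε_ne : ∀ σ, (ε σ : ℝ) ≠ 0 := fun σ => by rcases hε σ with h | h <;> simp [h]
  have hv : LinearIndependent ℝ fun σ => (ε σ : ℝ) • basisChain ℝ σ := by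
    simpa only [basisChain, ← Pi.single_smul', smul_eq_mul, mul_one] using
      Pi.linearIndependent_single_of_ne_zero hε_ne
  rw [cone_inter_ker_trivial_iff _ hv, gordan_alternative]
  rfl

/-- A `d`-dimensional hypertournament `T` on `n` vertices — a choice
of sign `ε σ ∈ {1, -1}` for each `(d+1)`-subset `σ` of `[n]`, the chosen oriented edge
being `ε σ • σ` (with `σ` increasingly ordered) in `C_d(K_n^{(d+1)})` — is acyclic
(the convex cone generated by `E(T)` contains no nonzero reduced `d`-cycle) if and
only if there is a coboundary `α = γ ∘ ∂_d ∈ B^d(K_n^{(d+1)}; ℝ)` with `α(e) > 0`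
for every `e ∈ E(T)`. -/
theorem hypertournament_acyclic_iff_coboundary (n d : ℕ) (hn : 2 ≤ n) (hd : 1 ≤ d)
    (ε : {σ : Finset (Fin n) // σ ∈ completeCx n d ∧ σ.card = d + 1} → ℤ)
    (hε : ∀ σ, ε σ = 1 ∨ ε σ = -1) :
    (∀ z : Chain ℝ (completeCx n d) (d + 1),
        (∃ c : {σ : Finset (Fin n) // σ ∈ completeCx n d ∧ σ.card = d + 1} → ℝ,
          (∀ σ, 0 ≤ c σ) ∧ z = ∑ σ, c σ • ((ε σ : ℝ) • basisChain ℝ σ)) →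
        bdry ℝ (completeCx n d) d z = 0 → z = 0) ↔
      ∃ γ : Module.Dual ℝ (Chain ℝ (completeCx n d) d),
        ∀ σ, 0 < γ.comp (bdry ℝ (completeCx n d) d) ((ε σ : ℝ) • basisChain ℝ σ) :=
  hypertournament_acyclic_iff_coboundary_general n d ε hε
end

section
/- Let $H$ be a $(d+1)$-uniform hypergraph and let $\sigma_1, \sigma_2$ be two valid proper $d$-sign patterns of $H$ that agree on every edge of $H$ except one edge $e$, with $\sigma_1 = \operatorname{sgn}\alpha_1$ and $\sigma_2 = \operatorname{sgn}\alpha_2$ for coboundaries $\alpha_1,\alpha_2 \in B^d(H;\mathbb{R})$. Then there exist $t_1, t_2 > 0$ such that the sign pattern $\operatorname{sgn}(t_1\alpha_1 + t_2\alpha_2)$ equals $\sigma_1$ (and $\sigma_2$) on all edges other than $e$, and equals $0$ on $e$. -/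
open Finset

variable {V : Type} [Fintype V] [LinearOrder V]

private lemma sign_combo {x y : ℝ} (hx : SignType.sign x ≠ 0)
    (hxy : SignType.sign x = SignType.sign y)
    {t₁ t₂ : ℝ} (ht₁ : 0 < t₁) (ht₂ : 0 < t₂) :
    SignType.sign (t₁ * x + t₂ * y) = SignType.sign x := by
  rcases lt_trichotomy x 0 with hx' | hx' | hx'
  · have hy : y < 0 := by
      by_contra h
      push_neg at h
      rcases h.lt_or_eq with h | h
      · rw [sign_neg hx', sign_pos h] at hxy; simp at hxy
      · rw [← h, sign_zero] at hxy; exact hx hxy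
    rw [sign_neg hx', sign_neg (by nlinarith : t₁ * x + t₂ * y < 0)]
  · simp [← hx'] at hx
  · have hy : 0 < y := by
      by_contra h
      push_neg at h
      rcases h.lt_or_eq with h | h
      · rw [sign_pos hx', sign_neg h] at hxy; simp at hxy
      · rw [h, sign_zero] at hxy; rw [hxy] at hx; simp at hx
    rw [sign_pos hx', sign_pos (by nlinarith : 0 < t₁ * x + t₂ * y)]

/-- Let `H` be a `(d+1)`-uniform hypergraph, and let `σ₁ = sgn α₁`,
`σ₂ = sgn α₂` be two valid proper `d`-sign patterns of `H` (a sign pattern is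
determined by its values on the increasingly ordered edges; `αᵢ = γᵢ ∘ ∂_d` are
coboundaries in `B^d(H; ℝ)`) that agree on every edge except one edge `e₀`.  Then
there are `t₁, t₂ > 0` such that `sgn (t₁α₁ + t₂α₂)` equals `σ₁` (and `σ₂`) on every
edge other than `e₀`, and equals `0` on `e₀`. -/
theorem sign_pattern_interpolation (d : ℕ) (hd : 1 ≤ d) (E : Finset (Finset V))
    (hE : ∀ e ∈ E, e.card = d + 1)
    (γ₁ γ₂ : Module.Dual ℝ (Chain ℝ (cx E d) d))
    (α₁ α₂ : Module.Dual ℝ (Chain ℝ (cx E d) (d + 1)))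
    (hα₁ : α₁ = γ₁.comp (bdry ℝ (cx E d) d)) (hα₂ : α₂ = γ₂.comp (bdry ℝ (cx E d) d))
    (hproper₁ : ∀ σ : {σ : Finset V // σ ∈ cx E d ∧ σ.card = d + 1},
      SignType.sign (α₁ (basisChain ℝ σ)) ≠ 0)
    (hproper₂ : ∀ σ : {σ : Finset V // σ ∈ cx E d ∧ σ.card = d + 1},
      SignType.sign (α₂ (basisChain ℝ σ)) ≠ 0)
    (e₀ : {σ : Finset V // σ ∈ cx E d ∧ σ.card = d + 1})
    (hagree : ∀ σ, σ ≠ e₀ →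
      SignType.sign (α₁ (basisChain ℝ σ)) = SignType.sign (α₂ (basisChain ℝ σ)))
    (hdiff : SignType.sign (α₁ (basisChain ℝ e₀)) ≠ SignType.sign (α₂ (basisChain ℝ e₀))) :
    ∃ t₁ t₂ : ℝ, 0 < t₁ ∧ 0 < t₂ ∧
      (∀ σ, σ ≠ e₀ →
        SignType.sign ((t₁ • α₁ + t₂ • α₂) (basisChain ℝ σ))
          = SignType.sign (α₁ (basisChain ℝ σ))) ∧
      SignType.sign ((t₁ • α₁ + t₂ • α₂) (basisChain ℝ e₀)) = 0 := by
  set a := α₁ (basisChain ℝ e₀) with ha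
  set b := α₂ (basisChain ℝ e₀) with hb
  have ha0 : a ≠ 0 := fun h => hproper₁ e₀ (by rw [← ha, h, sign_zero])
  have hb0 : b ≠ 0 := fun h => hproper₂ e₀ (by rw [← hb, h, sign_zero])
  refine ⟨|b|, |a|, abs_pos.mpr hb0, abs_pos.mpr ha0, ?_, ?_⟩
  · intro σ hσ
    have := hagree σ hσ
    simp only [LinearMap.add_apply, LinearMap.smul_apply, smul_eq_mul]
    exact sign_combo (hproper₁ σ) this (abs_pos.mpr hb0) (abs_pos.mpr ha0)
  · simp only [LinearMap.add_apply, LinearMap.smul_apply, smul_eq_mul, ← ha, ← hb]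
    have hkey : |b| * a + |a| * b = 0 := by
      rcases lt_trichotomy a 0 with ha' | ha' | ha'
      · have hbpos : 0 < b := by
          rcases lt_trichotomy b 0 with hb' | hb' | hb'
          · exact absurd (by rw [sign_neg ha', sign_neg hb']) hdiff
          · exact absurd hb' hb0
          · exact hb'
        rw [abs_of_pos hbpos, abs_of_neg ha']
        ring
      · exact absurd ha' ha0
      · have hbneg : b < 0 := by
          rcases lt_trichotomy b 0 with hb' | hb' | hb'
          · exact hb'
          · exact absurd hb' hb0
          · exact absurd (by rw [sign_pos ha', sign_pos hb']) hdiff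
        rw [abs_of_neg hbneg, abs_of_pos ha']
        ring
    rw [hkey, sign_zero]
end
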